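/- arXiv:2002.06808 — 2 statements merged into one kernel-verified Lean document; each statement's English description precedes it below -/
import Mathlib

section
/- Suppose that for every r > 0 there is a symmetric positive semidefinite matrix K(r) satisfying the discrete algebraic Riccati equation with penalty r, that sup_{t≥0, r>0} ‖K_t(r)‖_F < ∞, and that sup_{r>0} ‖K_t(r) − K(r)‖_F → 0 as t → ∞ (Frobenius norm), where K_t(r) are the Riccati iterates started from K₀(r) = Q. Define J*(x,r) := xᵀK(r) x + (γ/(1−γ)) ∫ nᵀK(r) n dμ(n). Then J* ∈ V and the Bellman iterates v_t := T^t 0 (starting from the zero function) converge to J* in the metric ρ: lim_{t→∞} ‖T^t 0 − J*‖ = 0. -/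
open MeasureTheory Matrix Filter

noncomputable section

/-- The weighted sup-norm `‖v‖ = sup_{(x,r) ∈ S} |v(x,r)| / (max(‖(x,r)‖₂,1))²` on functions on
`S = ℝ^d × (0,∞)` (the `r`-argument is curried; only `r > 0` matters). -/
def normV {d : ℕ} (v : (Fin d → ℝ) → ℝ → ℝ) : ENNReal :=
  ⨆ (x : Fin d → ℝ) (r : Set.Ioi (0 : ℝ)),
    ENNReal.ofReal (|v x r.1| / (max (Real.sqrt ((∑ i, x i ^ 2) + r.1 ^ 2)) 1) ^ 2)

/-- The metric `ρ(v,w) = ‖v − w‖` induced by the weighted sup-norm. -/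
def distV {d : ℕ} (v w : (Fin d → ℝ) → ℝ → ℝ) : ℝ :=
  (normV (fun x r => v x r - w x r)).toReal

/-- The Bellman operator
`(Tv)(x,r) = xᵀQx + inf_u ( r u² + γ ∫ v(Ax + b u + n, r) dμ(n) )`. -/
def bellmanT {d : ℕ} (A Q : Matrix (Fin d) (Fin d) ℝ) (b : Fin d → ℝ) (γ : ℝ)
    (μ : Measure (Fin d → ℝ)) (v : (Fin d → ℝ) → ℝ → ℝ) : (Fin d → ℝ) → ℝ → ℝ :=
  fun x r => x ⬝ᵥ Q.mulVec x +
    ⨅ u : ℝ, (r * u ^ 2 + γ * ∫ n, v (A.mulVec x + u • b + n) r ∂μ)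

/-- One step of the Riccati recursion with control penalty `r`:
`K ↦ Q + Aᵀ( γK − (γ²/(γ bᵀK b + r)) K b bᵀ K )A`. -/
def riccatiStep {d : ℕ} (A Q : Matrix (Fin d) (Fin d) ℝ) (b : Fin d → ℝ) (γ r : ℝ)
    (K : Matrix (Fin d) (Fin d) ℝ) : Matrix (Fin d) (Fin d) ℝ :=
  Q + Aᵀ * (γ • K - (γ ^ 2 / (γ * (b ⬝ᵥ K.mulVec b) + r)) • (K * vecMulVec b b * K)) * A

/-- The Riccati iterates `K_0(r) = Q`, `K_{t+1}(r) = riccatiStep K_t(r)`. -/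
def riccatiIter {d : ℕ} (A Q : Matrix (Fin d) (Fin d) ℝ) (b : Fin d → ℝ) (γ r : ℝ)
    (t : ℕ) : Matrix (Fin d) (Fin d) ℝ :=
  (riccatiStep A Q b γ r)^[t] Q

/-- Frobenius norm of a real matrix. -/
def frob {d : ℕ} (M : Matrix (Fin d) (Fin d) ℝ) : ℝ :=
  Real.sqrt (∑ i, ∑ j, (M i j) ^ 2)

/-!
Value iteration from the zero function stays among quadratics: if `v (y, r) = yᵀ P y + c`, then,
the noise being centred, `r u² + γ ∫ v (A x + b u + n, r) dμ` is a quadratic in `u` whose minimum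
is `(T v) (x, r) = xᵀ R_r(P) x + γ (∫ nᵀ P n dμ + c)`, with `R_r` the Riccati step. Hence
`T^(t+1) 0 = xᵀ K_t(r) x + c_t(r)`, and `T^(t+1) 0 - J*` splits into `xᵀ (K_t(r) - K(r)) x`, of size
at most `‖K_t(r) - K(r)‖_F ‖x‖²`, and a constant error `e_t(r)` that obeys
`|e_(t+1)| ≤ γ |e_t| + γ M ‖K_t(r) - K(r)‖_F` with `M = ∫ ‖n‖² dμ`. Both parts tend to zero
uniformly in `r`, which is convergence in the weighted sup-norm.
-/

namespace Matrix

variable {ι : Type*} [Fintype ι]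

theorem IsSymm.dotProduct_mulVec_comm {R : Type*} [CommSemiring R] {K : Matrix ι ι R}
    (hK : K.IsSymm) (x y : ι → R) : x ⬝ᵥ K *ᵥ y = y ⬝ᵥ K *ᵥ x := by
  rw [dotProduct_mulVec, ← mulVec_transpose, hK.eq, dotProduct_comm]

theorem PosSemidef.dotProduct_mulVec_self_nonneg {K : Matrix ι ι ℝ} (hK : K.PosSemidef)
    (x : ι → ℝ) : 0 ≤ x ⬝ᵥ K *ᵥ x := by
  simpa using hK.dotProduct_mulVec_nonneg x

theorem PosSemidef.sq_dotProduct_mulVec_le {K : Matrix ι ι ℝ} (hK : K.PosSemidef)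
    (x y : ι → ℝ) : (x ⬝ᵥ K *ᵥ y) ^ 2 ≤ (x ⬝ᵥ K *ᵥ x) * (y ⬝ᵥ K *ᵥ y) := by
  have hsymm : K.IsSymm := isHermitian_iff_isSymm.mp hK.1
  have hquad : ∀ t : ℝ,
      0 ≤ (y ⬝ᵥ K *ᵥ y) * (t * t) + (2 * (x ⬝ᵥ K *ᵥ y)) * t + x ⬝ᵥ K *ᵥ x := by
    intro t
    have h := hK.dotProduct_mulVec_self_nonneg (x + t • y)
    simp only [mulVec_add, dotProduct_add, add_dotProduct, mulVec_smul, dotProduct_smul,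
      smul_dotProduct, smul_eq_mul, hsymm.dotProduct_mulVec_comm y x] at h
    linarith
  have := discrim_le_zero hquad
  rw [discrim] at this
  linarith

end Matrix

section Frobenius

variable {d : ℕ}

theorem frob_nonneg (M : Matrix (Fin d) (Fin d) ℝ) : 0 ≤ frob M :=
  Real.sqrt_nonneg _

theorem abs_dotProduct_mulVec_le_frob (M : Matrix (Fin d) (Fin d) ℝ) (x : Fin d → ℝ) :
    |x ⬝ᵥ M *ᵥ x| ≤ frob M * ∑ i, x i ^ 2 := by
  have hsum : x ⬝ᵥ M *ᵥ x = ∑ p : Fin d × Fin d, M p.1 p.2 * (x p.1 * x p.2) := by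
    simp [dotProduct, mulVec, Finset.mul_sum, Fintype.sum_prod_type, mul_left_comm]
  have hx : ∑ p : Fin d × Fin d, (x p.1 * x p.2) ^ 2 = (∑ i, x i ^ 2) ^ 2 := by
    rw [Fintype.sum_prod_type, sq, Finset.sum_mul_sum]
    simp only [mul_pow]
  have hcs : (x ⬝ᵥ M *ᵥ x) ^ 2 ≤ (∑ i, ∑ j, M i j ^ 2) * (∑ i, x i ^ 2) ^ 2 := by
    rw [hsum, ← hx, ← Fintype.sum_prod_type']
    exact Finset.sum_mul_sq_le_sq_mul_sq _ _ _
  calc |x ⬝ᵥ M *ᵥ x| = √((x ⬝ᵥ M *ᵥ x) ^ 2) := (Real.sqrt_sq_eq_abs _).symm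
    _ ≤ √((∑ i, ∑ j, M i j ^ 2) * (∑ i, x i ^ 2) ^ 2) := Real.sqrt_le_sqrt hcs
    _ = frob M * ∑ i, x i ^ 2 := by
      rw [Real.sqrt_mul (by positivity), Real.sqrt_sq (by positivity), frob]

attribute [local instance] Matrix.frobeniusNormedAddCommGroup

theorem frob_eq_norm (M : Matrix (Fin d) (Fin d) ℝ) : frob M = ‖M‖ := by
  simp [frob, Matrix.frobenius_norm_def, Real.sqrt_eq_rpow]

theorem frob_le_frob_add_frob_sub (M N : Matrix (Fin d) (Fin d) ℝ) :
    frob N ≤ frob M + frob (M - N) := by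
  simpa only [frob_eq_norm] using norm_le_norm_add_norm_sub M N

end Frobenius

section Riccati

variable {d : ℕ} {A Q K : Matrix (Fin d) (Fin d) ℝ} {b : Fin d → ℝ} {γ r : ℝ}

theorem riccatiStep_zero (A Q : Matrix (Fin d) (Fin d) ℝ) (b : Fin d → ℝ) (γ r : ℝ) :
    riccatiStep A Q b γ r 0 = Q := by
  simp [riccatiStep]

theorem riccatiIter_succ (A Q : Matrix (Fin d) (Fin d) ℝ) (b : Fin d → ℝ) (γ r : ℝ) (t : ℕ) :
    riccatiIter A Q b γ r (t + 1) = riccatiStep A Q b γ r (riccatiIter A Q b γ r t) :=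
  Function.iterate_succ_apply' _ _ _

theorem dotProduct_riccatiStep_mulVec (hK : K.IsSymm) (x : Fin d → ℝ) :
    x ⬝ᵥ riccatiStep A Q b γ r K *ᵥ x
      = x ⬝ᵥ Q *ᵥ x + γ * ((A *ᵥ x) ⬝ᵥ K *ᵥ (A *ᵥ x))
        - γ ^ 2 / (γ * (b ⬝ᵥ K *ᵥ b) + r) * ((A *ᵥ x) ⬝ᵥ K *ᵥ b) ^ 2 := by
  have hconj : ∀ M : Matrix (Fin d) (Fin d) ℝ, x ⬝ᵥ (Aᵀ * M * A) *ᵥ x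
      = (A *ᵥ x) ⬝ᵥ M *ᵥ (A *ᵥ x) := fun M => by
    rw [← mulVec_mulVec, ← mulVec_mulVec, dotProduct_mulVec, vecMul_transpose]
  have hrank_one : (K * vecMulVec b b * K) *ᵥ (A *ᵥ x)
      = ((A *ᵥ x) ⬝ᵥ K *ᵥ b) • (K *ᵥ b) := by
    rw [← mulVec_mulVec, ← mulVec_mulVec, vecMulVec_mulVec, op_smul_eq_smul, mulVec_smul,
      hK.dotProduct_mulVec_comm]
  simp only [riccatiStep, add_mulVec, dotProduct_add, hconj, sub_mulVec, dotProduct_sub,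
    smul_mulVec, dotProduct_smul, smul_eq_mul, hrank_one]
  ring

theorem isSymm_riccatiStep (hQ : Q.IsSymm) (hK : K.IsSymm) :
    (riccatiStep A Q b γ r K).IsSymm := by
  simp [IsSymm, riccatiStep, transpose_add, transpose_mul, transpose_smul, transpose_sub,
    transpose_vecMulVec, hQ.eq, hK.eq, Matrix.mul_assoc]

theorem posSemidef_riccatiStep (hQ : Q.PosSemidef) (hγ : 0 ≤ γ) (hr : 0 < r)
    (hK : K.PosSemidef) : (riccatiStep A Q b γ r K).PosSemidef := by
  have hKsymm : K.IsSymm := isHermitian_iff_isSymm.mp hK.1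
  refine .of_dotProduct_mulVec_nonneg (isHermitian_iff_isSymm.mpr
    (isSymm_riccatiStep (isHermitian_iff_isSymm.mp hQ.1) hKsymm)) fun x => ?_
  rw [star_trivial, dotProduct_riccatiStep_mulVec hKsymm]
  set z := A *ᵥ x
  have hden : 0 < γ * (b ⬝ᵥ K *ᵥ b) + r := by
    have := hK.dotProduct_mulVec_self_nonneg b
    positivity
  have hcs := hK.sq_dotProduct_mulVec_le z b
  have hz := hK.dotProduct_mulVec_self_nonneg z
  have hgain : γ ^ 2 / (γ * (b ⬝ᵥ K *ᵥ b) + r) * (z ⬝ᵥ K *ᵥ b) ^ 2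
      ≤ γ * (z ⬝ᵥ K *ᵥ z) := by
    rw [div_mul_eq_mul_div, div_le_iff₀ hden]
    nlinarith [mul_le_mul_of_nonneg_left hcs (sq_nonneg γ), mul_nonneg (mul_nonneg hγ hz) hr.le]
  linarith [hQ.dotProduct_mulVec_self_nonneg x]

theorem posSemidef_riccatiIter (hQ : Q.PosSemidef) (hγ : 0 ≤ γ) (hr : 0 < r) (t : ℕ) :
    (riccatiIter A Q b γ r t).PosSemidef := by
  induction t with
  | zero => exact hQ
  | succ t ih => rw [riccatiIter_succ]; exact posSemidef_riccatiStep hQ hγ hr ih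

end Riccati

section NoiseIntegrals

variable {d : ℕ} {μ : Measure (Fin d → ℝ)}

theorem integrable_apply_of_integrable_sum_sq [IsFiniteMeasure μ]
    (hmom : Integrable (fun n => ∑ i, n i ^ 2) μ) (i : Fin d) :
    Integrable (fun n : Fin d → ℝ => n i) μ := by
  refine Integrable.mono' ((integrable_const 1).add hmom)
    (measurable_pi_apply i).aestronglyMeasurable (ae_of_all _ fun n => ?_)
  have hi : n i ^ 2 ≤ ∑ j, n j ^ 2 :=
    Finset.single_le_sum (fun j _ => sq_nonneg (n j)) (Finset.mem_univ i)
  rw [Real.norm_eq_abs, Pi.add_apply]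
  nlinarith [sq_nonneg (|n i| - 1), sq_abs (n i)]

theorem integrable_dotProduct_mulVec_self (hmom : Integrable (fun n => ∑ i, n i ^ 2) μ)
    (K : Matrix (Fin d) (Fin d) ℝ) : Integrable (fun n => n ⬝ᵥ K *ᵥ n) μ :=
  (hmom.const_mul (frob K)).mono'
    (by fun_prop : Continuous fun n => n ⬝ᵥ K *ᵥ n).aestronglyMeasurable
    (ae_of_all _ fun n => abs_dotProduct_mulVec_le_frob K n)

theorem abs_integral_dotProduct_mulVec_le (hmom : Integrable (fun n => ∑ i, n i ^ 2) μ)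
    (K : Matrix (Fin d) (Fin d) ℝ) :
    |∫ n, n ⬝ᵥ K *ᵥ n ∂μ| ≤ frob K * ∫ n, ∑ i, n i ^ 2 ∂μ :=
  calc |∫ n, n ⬝ᵥ K *ᵥ n ∂μ| ≤ ∫ n, |n ⬝ᵥ K *ᵥ n| ∂μ := abs_integral_le_integral_abs
    _ ≤ ∫ n, frob K * ∑ i, n i ^ 2 ∂μ :=
      integral_mono (integrable_dotProduct_mulVec_self hmom K).abs (hmom.const_mul _)
        (abs_dotProduct_mulVec_le_frob K)
    _ = frob K * ∫ n, ∑ i, n i ^ 2 ∂μ := integral_const_mul _ _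

theorem integrable_dotProduct [IsFiniteMeasure μ]
    (hmom : Integrable (fun n => ∑ i, n i ^ 2) μ) (w : Fin d → ℝ) :
    Integrable (fun n => w ⬝ᵥ n) μ :=
  integrable_finsetSum _ fun i _ => (integrable_apply_of_integrable_sum_sq hmom i).const_mul _

theorem integral_dotProduct_eq_zero [IsFiniteMeasure μ]
    (hmom : Integrable (fun n => ∑ i, n i ^ 2) μ) (hmean : ∀ i, ∫ n, n i ∂μ = 0)
    (w : Fin d → ℝ) : ∫ n, w ⬝ᵥ n ∂μ = 0 := by
  simp only [dotProduct]
  rw [integral_finsetSum _ fun i _ => (integrable_apply_of_integrable_sum_sq hmom i).const_mul _]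
  simp [integral_const_mul, hmean]

theorem integral_dotProduct_mulVec_add_self_add_const [IsProbabilityMeasure μ]
    (hmom : Integrable (fun n => ∑ i, n i ^ 2) μ) (hmean : ∀ i, ∫ n, n i ∂μ = 0)
    {K : Matrix (Fin d) (Fin d) ℝ} (hK : K.IsSymm) (y : Fin d → ℝ) (c : ℝ) :
    ∫ n, ((y + n) ⬝ᵥ K *ᵥ (y + n) + c) ∂μ = y ⬝ᵥ K *ᵥ y + ∫ n, n ⬝ᵥ K *ᵥ n ∂μ + c := by
  -- the cross term is linear in the centred noise
  have hexpand : ∀ n, (y + n) ⬝ᵥ K *ᵥ (y + n) + c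
      = (2 • K *ᵥ y) ⬝ᵥ n + (n ⬝ᵥ K *ᵥ n + (y ⬝ᵥ K *ᵥ y + c)) := fun n => by
    simp only [mulVec_add, dotProduct_add, add_dotProduct, hK.dotProduct_mulVec_comm n y,
      dotProduct_comm (K *ᵥ y), smul_dotProduct]
    ring
  simp only [hexpand]
  have hquad := integrable_dotProduct_mulVec_self hmom K
  have hquad' : Integrable (fun n => n ⬝ᵥ K *ᵥ n + (y ⬝ᵥ K *ᵥ y + c)) μ :=
    hquad.add (integrable_const _)
  rw [integral_add (integrable_dotProduct hmom _) hquad',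
    integral_add hquad (integrable_const _), integral_dotProduct_eq_zero hmom hmean,
    integral_const, probReal_univ, one_smul]
  ring

end NoiseIntegrals

theorem iInf_quadratic {a : ℝ} (ha : 0 < a) (p q : ℝ) :
    ⨅ u : ℝ, (a * u ^ 2 + p * u + q) = q - p ^ 2 / (4 * a) := by
  have hsquare : ∀ u, a * u ^ 2 + p * u + q = a * (u + p / (2 * a)) ^ 2 + (q - p ^ 2 / (4 * a)) :=
    fun u => by field_simp; ring
  refine IsLeast.csInf_eq ⟨⟨-(p / (2 * a)), by dsimp only; rw [hsquare]; simp⟩, ?_⟩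
  rintro _ ⟨u, rfl⟩
  dsimp only
  rw [hsquare]
  have := sq_nonneg (u + p / (2 * a))
  nlinarith

section Bellman

variable {d : ℕ} {A Q K : Matrix (Fin d) (Fin d) ℝ} {b : Fin d → ℝ} {γ r : ℝ}
  {μ : Measure (Fin d → ℝ)} [IsProbabilityMeasure μ]

theorem bellmanT_apply_of_quadratic (hmom : Integrable (fun n => ∑ i, n i ^ 2) μ)
    (hmean : ∀ i, ∫ n, n i ∂μ = 0) (hγ : 0 ≤ γ) (hr : 0 < r) (hK : K.PosSemidef)
    {v : (Fin d → ℝ) → ℝ → ℝ} {c : ℝ} (hv : ∀ y, v y r = y ⬝ᵥ K *ᵥ y + c) (x : Fin d → ℝ) :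
    bellmanT A Q b γ μ v x r
      = x ⬝ᵥ riccatiStep A Q b γ r K *ᵥ x + γ * (∫ n, n ⬝ᵥ K *ᵥ n ∂μ + c) := by
  have hKsymm : K.IsSymm := isHermitian_iff_isSymm.mp hK.1
  have hα : 0 < γ * (b ⬝ᵥ K *ᵥ b) + r := by
    have := hK.dotProduct_mulVec_self_nonneg b
    positivity
  have hcost : ∀ u : ℝ, r * u ^ 2 + γ * ∫ n, v (A *ᵥ x + u • b + n) r ∂μ
      = (γ * (b ⬝ᵥ K *ᵥ b) + r) * u ^ 2 + (2 * γ * ((A *ᵥ x) ⬝ᵥ K *ᵥ b)) * u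
        + γ * ((A *ᵥ x) ⬝ᵥ K *ᵥ (A *ᵥ x) + ∫ n, n ⬝ᵥ K *ᵥ n ∂μ + c) := fun u => by
    simp only [hv]
    rw [integral_dotProduct_mulVec_add_self_add_const hmom hmean hKsymm]
    simp only [mulVec_add, dotProduct_add, add_dotProduct, mulVec_smul, dotProduct_smul,
      smul_dotProduct, smul_eq_mul, hKsymm.dotProduct_mulVec_comm b (A *ᵥ x)]
    ring
  rw [bellmanT]
  simp_rw [hcost]
  rw [iInf_quadratic hα, dotProduct_riccatiStep_mulVec hKsymm]
  field_simp
  ring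

end Bellman

section ValueIteration

variable {d : ℕ} {A Q : Matrix (Fin d) (Fin d) ℝ} {b : Fin d → ℝ} {γ r : ℝ}
  {μ : Measure (Fin d → ℝ)}

def noiseCost (A Q : Matrix (Fin d) (Fin d) ℝ) (b : Fin d → ℝ) (γ : ℝ)
    (μ : Measure (Fin d → ℝ)) (r : ℝ) : ℕ → ℝ
  | 0 => 0
  | t + 1 => γ * (∫ n, n ⬝ᵥ riccatiIter A Q b γ r t *ᵥ n ∂μ + noiseCost A Q b γ μ r t)

theorem bellmanT_iterate_succ_zero_apply [IsProbabilityMeasure μ]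
    (hmom : Integrable (fun n => ∑ i, n i ^ 2) μ) (hmean : ∀ i, ∫ n, n i ∂μ = 0) (hQ : Q.PosSemidef) (hγ : 0 ≤ γ) (hr : 0 < r) (t : ℕ)
    (x : Fin d → ℝ) :
    (bellmanT A Q b γ μ)^[t + 1] (fun _ _ => 0) x r
      = x ⬝ᵥ riccatiIter A Q b γ r t *ᵥ x + noiseCost A Q b γ μ r t := by
  induction t generalizing x with
  | zero =>
    rw [Function.iterate_one,
      bellmanT_apply_of_quadratic hmom hmean hγ hr PosSemidef.zero (c := 0) (by simp)]
    simp [riccatiStep_zero, riccatiIter, noiseCost]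
  | succ t ih =>
    rw [Function.iterate_succ_apply', bellmanT_apply_of_quadratic hmom hmean hγ hr
      (posSemidef_riccatiIter hQ hγ hr t) ih, riccatiIter_succ]
    rfl

theorem abs_noiseCost_le (hmom : Integrable (fun n => ∑ i, n i ^ 2) μ) (hγ0 : 0 ≤ γ)
    (hγ1 : γ < 1) {C : ℝ} (hC : ∀ t, frob (riccatiIter A Q b γ r t) ≤ C) (t : ℕ) :
    |noiseCost A Q b γ μ r t| ≤ γ / (1 - γ) * (C * ∫ n, ∑ i, n i ^ 2 ∂μ) := by
  have hM2 : 0 ≤ ∫ n, ∑ i, n i ^ 2 ∂μ := integral_nonneg fun n => by positivity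
  have hC0 : 0 ≤ C := (frob_nonneg _).trans (hC 0)
  induction t with
  | zero =>
    have : 0 < 1 - γ := by linarith
    simp only [noiseCost, abs_zero]
    positivity
  | succ t ih =>
    have hm := (abs_integral_dotProduct_mulVec_le hmom (riccatiIter A Q b γ r t)).trans
      (mul_le_mul_of_nonneg_right (hC t) hM2)
    rw [noiseCost, abs_mul, abs_of_nonneg hγ0]
    calc γ * |∫ n, n ⬝ᵥ riccatiIter A Q b γ r t *ᵥ n ∂μ + noiseCost A Q b γ μ r t|
        ≤ γ * (C * ∫ n, ∑ i, n i ^ 2 ∂μ + γ / (1 - γ) * (C * ∫ n, ∑ i, n i ^ 2 ∂μ)) :=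
          mul_le_mul_of_nonneg_left ((abs_add_le _ _).trans (add_le_add hm ih)) hγ0
      _ = γ / (1 - γ) * (C * ∫ n, ∑ i, n i ^ 2 ∂μ) := by
          have : 1 - γ ≠ 0 := by linarith
          field_simp
          ring

-- `γ / (1 - γ) * ∫ nᵀ P n dμ` is the fixed point of `c ↦ γ * (∫ nᵀ P n dμ + c)`.
theorem abs_noiseCost_succ_sub_le (hmom : Integrable (fun n => ∑ i, n i ^ 2) μ) (hγ0 : 0 ≤ γ)
    (hγ1 : γ ≠ 1) (P : Matrix (Fin d) (Fin d) ℝ) (t : ℕ) :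
    |noiseCost A Q b γ μ r (t + 1) - γ / (1 - γ) * ∫ n, n ⬝ᵥ P *ᵥ n ∂μ|
      ≤ γ * |noiseCost A Q b γ μ r t - γ / (1 - γ) * ∫ n, n ⬝ᵥ P *ᵥ n ∂μ|
        + γ * (∫ n, ∑ i, n i ^ 2 ∂μ) * frob (riccatiIter A Q b γ r t - P) := by
  have hsub : ∫ n, n ⬝ᵥ riccatiIter A Q b γ r t *ᵥ n ∂μ - ∫ n, n ⬝ᵥ P *ᵥ n ∂μ
      = ∫ n, n ⬝ᵥ (riccatiIter A Q b γ r t - P) *ᵥ n ∂μ := by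
    rw [← integral_sub (integrable_dotProduct_mulVec_self hmom _)
      (integrable_dotProduct_mulVec_self hmom _)]
    simp only [sub_mulVec, dotProduct_sub]
  have hsplit : noiseCost A Q b γ μ r (t + 1) - γ / (1 - γ) * ∫ n, n ⬝ᵥ P *ᵥ n ∂μ
      = γ * (noiseCost A Q b γ μ r t - γ / (1 - γ) * ∫ n, n ⬝ᵥ P *ᵥ n ∂μ)
        + γ * ∫ n, n ⬝ᵥ (riccatiIter A Q b γ r t - P) *ᵥ n ∂μ := by
    rw [← hsub, noiseCost]
    have : 1 - γ ≠ 0 := sub_ne_zero.mpr hγ1.symm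
    field_simp
    ring
  rw [hsplit]
  refine (abs_add_le _ _).trans (add_le_add ?_ ?_)
  · rw [abs_mul, abs_of_nonneg hγ0]
  · rw [abs_mul, abs_of_nonneg hγ0, mul_assoc, mul_comm (∫ n, ∑ i, n i ^ 2 ∂μ)]
    exact mul_le_mul_of_nonneg_left (abs_integral_dotProduct_mulVec_le hmom _) hγ0

end ValueIteration

theorem tendstoUniformlyOn_zero_of_abs_succ_le {ι : Type*} {s : Set ι} {γ L B : ℝ}
    (hγ0 : 0 ≤ γ) (hγ1 : γ < 1) (hL : 0 ≤ L) {e δ : ℕ → ι → ℝ}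
    (hB : ∀ t, ∀ i ∈ s, |e t i| ≤ B) (hδ : TendstoUniformlyOn δ 0 atTop s)
    (hrec : ∀ t, ∀ i ∈ s, |e (t + 1) i| ≤ γ * |e t i| + L * δ t i) :
    TendstoUniformlyOn e 0 atTop s := by
  rw [Metric.tendstoUniformlyOn_iff] at hδ ⊢
  intro ε hε
  have h1γ : 0 < 1 - γ := by linarith
  -- once `δ < η`, the forcing accumulates to at most `L * η / (1 - γ) < ε / 2`
  set η := ε * (1 - γ) / (2 * (L + 1))
  have hLη : L * η / (1 - γ) < ε / 2 := by
    have : L * η / (1 - γ) = ε / 2 * (L / (L + 1)) := by simp only [η]; field_simp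
    rw [this, mul_lt_iff_lt_one_right (half_pos hε), div_lt_one (by linarith)]
    linarith
  obtain ⟨T, hT⟩ := eventually_atTop.1 (hδ η (by positivity))
  obtain ⟨k₀, hk₀⟩ := eventually_atTop.1 <|
    ((tendsto_pow_atTop_nhds_zero_of_lt_one hγ0 hγ1).mul_const B).eventually
      (gt_mem_nhds (by simpa using half_pos hε : 0 * B < ε / 2))
  have hdecay : ∀ k, ∀ i ∈ s, |e (T + k) i| ≤ γ ^ k * B + L * η / (1 - γ) := by
    intro k
    induction k with
    | zero =>
      intro i hi
      have : 0 ≤ L * η / (1 - γ) := by positivity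
      simpa using (hB T i hi).trans (le_add_of_nonneg_right this)
    | succ k ih =>
      intro i hi
      have hδk : δ (T + k) i < η := by
        simpa using (le_abs_self _).trans_lt (by simpa using hT (T + k) (by omega) i hi)
      calc |e (T + (k + 1)) i| ≤ γ * |e (T + k) i| + L * δ (T + k) i := hrec (T + k) i hi
        _ ≤ γ * (γ ^ k * B + L * η / (1 - γ)) + L * η := by
          gcongr
          exact ih i hi
        _ = γ ^ (k + 1) * B + L * η / (1 - γ) := by field_simp; ring
  filter_upwards [eventually_ge_atTop (T + k₀)] with t ht i hi
  obtain ⟨k, rfl⟩ := Nat.exists_eq_add_of_le ((Nat.le_add_right T k₀).trans ht)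
  have := hk₀ k (by omega)
  simpa using (hdecay k i hi).trans_lt (by linarith)

section WeightedNorm

variable {d : ℕ}

theorem normV_le_ofReal {v : (Fin d → ℝ) → ℝ → ℝ} {a c : ℝ} (ha : 0 ≤ a) (hc : 0 ≤ c)
    (h : ∀ x, ∀ r > 0, |v x r| ≤ a * ∑ i, x i ^ 2 + c) :
    normV v ≤ ENNReal.ofReal (a + c) := by
  refine iSup₂_le fun x r => ENNReal.ofReal_le_ofReal ?_
  set D := max √(∑ i, x i ^ 2 + r.1 ^ 2) 1 ^ 2
  have hD1 : 1 ≤ D := one_le_pow₀ (le_max_right _ _)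
  have hxD : ∑ i, x i ^ 2 ≤ D := by
    calc ∑ i, x i ^ 2 ≤ √(∑ i, x i ^ 2 + r.1 ^ 2) ^ 2 := by
          rw [Real.sq_sqrt (by positivity)]
          linarith [sq_nonneg r.1]
      _ ≤ D := pow_le_pow_left₀ (Real.sqrt_nonneg _) (le_max_left _ _) 2
  rw [div_le_iff₀ (by linarith)]
  nlinarith [h x r.1 r.2]

theorem distV_le {v w : (Fin d → ℝ) → ℝ → ℝ} {a c : ℝ} (ha : 0 ≤ a) (hc : 0 ≤ c)
    (h : ∀ x, ∀ r > 0, |v x r - w x r| ≤ a * ∑ i, x i ^ 2 + c) :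
    distV v w ≤ a + c :=
  ENNReal.toReal_le_of_le_ofReal (by positivity) (normV_le_ofReal ha hc h)

theorem normV_quadratic_lt_top {P : ℝ → Matrix (Fin d) (Fin d) ℝ} {c : ℝ → ℝ} {a e : ℝ}
    (hP : ∀ r > 0, frob (P r) ≤ a) (hc : ∀ r > 0, |c r| ≤ e) :
    normV (fun x r => x ⬝ᵥ P r *ᵥ x + c r) < ⊤ := by
  have ha : 0 ≤ a := (frob_nonneg _).trans (hP 1 one_pos)
  have he : 0 ≤ e := (abs_nonneg _).trans (hc 1 one_pos)
  refine (normV_le_ofReal ha he fun x r hr => (abs_add_le _ _).trans (add_le_add ?_ (hc r hr))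
    ).trans_lt ENNReal.ofReal_lt_top
  exact (abs_dotProduct_mulVec_le_frob _ x).trans (by gcongr; exact hP r hr)

theorem tendsto_distV_quadratic {v : ℕ → (Fin d → ℝ) → ℝ → ℝ}
    {P : ℕ → ℝ → Matrix (Fin d) (Fin d) ℝ} {P' : ℝ → Matrix (Fin d) (Fin d) ℝ}
    {c : ℕ → ℝ → ℝ} {c' : ℝ → ℝ} (hv : ∀ t x, ∀ r > 0, v t x r = x ⬝ᵥ P t r *ᵥ x + c t r)
    (hP : TendstoUniformlyOn (fun t r => frob (P t r - P' r)) 0 atTop (Set.Ioi 0))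
    (hc : TendstoUniformlyOn (fun t r => c t r - c' r) 0 atTop (Set.Ioi 0)) :
    Tendsto (fun t => distV (v t) (fun x r => x ⬝ᵥ P' r *ᵥ x + c' r)) atTop (nhds 0) := by
  rw [Metric.tendstoUniformlyOn_iff] at hP hc
  refine Metric.tendsto_nhds.2 fun ε hε => ?_
  filter_upwards [hP (ε / 3) (by positivity), hc (ε / 3) (by positivity)] with t hPt hct
  have hdist : distV (v t) (fun x r => x ⬝ᵥ P' r *ᵥ x + c' r) ≤ ε / 3 + ε / 3 := by
    refine distV_le (by positivity) (by positivity) fun x r hr => ?_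
    have hPt' : frob (P t r - P' r) ≤ ε / 3 :=
      (le_abs_self _).trans (by simpa using (hPt r hr).le)
    have hct' : |c t r - c' r| ≤ ε / 3 := by
      simpa [Real.dist_eq, abs_sub_comm] using (hct r hr).le
    rw [hv t x r hr, add_sub_add_comm, ← dotProduct_sub, ← sub_mulVec]
    exact (abs_add_le _ _).trans
      (add_le_add ((abs_dotProduct_mulVec_le_frob _ x).trans (by gcongr)) hct')
  have hnonneg : 0 ≤ distV (v t) (fun x r => x ⬝ᵥ P' r *ᵥ x + c' r) := ENNReal.toReal_nonneg
  rw [Real.dist_0_eq_abs, abs_lt]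
  constructor <;> linarith

end WeightedNorm

theorem bellman_iterates_converge_to_optimal_cost_general
    (d : ℕ)
    (A Q : Matrix (Fin d) (Fin d) ℝ) (b : Fin d → ℝ) (hQ : Q.PosSemidef)
    (γ : ℝ) (hγ : γ ∈ Set.Ioo (0 : ℝ) 1)
    (μ : Measure (Fin d → ℝ)) [IsProbabilityMeasure μ]
    (hmean : ∀ i, ∫ n, n i ∂μ = 0)
    (hmom : Integrable (fun n => ∑ i, (n i) ^ 2) μ)
    (K : ℝ → Matrix (Fin d) (Fin d) ℝ)
    (hbdd : ∃ C : ℝ, ∀ t : ℕ, ∀ r > (0 : ℝ), frob (riccatiIter A Q b γ r t) ≤ C)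
    (hconv : ∀ ε > (0 : ℝ), ∃ T : ℕ, ∀ t ≥ T, ∀ r > (0 : ℝ),
      frob (riccatiIter A Q b γ r t - K r) < ε) :
    normV (fun x r => x ⬝ᵥ (K r).mulVec x +
        γ / (1 - γ) * ∫ n, n ⬝ᵥ (K r).mulVec n ∂μ) < ⊤ ∧
    Tendsto (fun t => distV ((bellmanT A Q b γ μ)^[t] (fun _ _ => 0))
        (fun x r => x ⬝ᵥ (K r).mulVec x + γ / (1 - γ) * ∫ n, n ⬝ᵥ (K r).mulVec n ∂μ))
      atTop (nhds 0) := by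
  obtain ⟨hγ0, hγ1⟩ := hγ
  obtain ⟨C, hC⟩ := hbdd
  set M := ∫ n, ∑ i, n i ^ 2 ∂μ
  have hKfrob : ∀ r > 0, frob (K r) ≤ C + 1 := fun r hr => by
    obtain ⟨T, hT⟩ := hconv 1 one_pos
    exact (frob_le_frob_add_frob_sub _ _).trans (add_le_add (hC T r hr) (hT T le_rfl r hr).le)
  have hcost : ∀ r > 0, |γ / (1 - γ) * ∫ n, n ⬝ᵥ K r *ᵥ n ∂μ| ≤ γ / (1 - γ) * ((C + 1) * M) :=
    fun r hr => by
      rw [abs_mul, abs_of_pos (div_pos hγ0 (by linarith))]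
      gcongr
      exact (abs_integral_dotProduct_mulVec_le hmom _).trans (by gcongr; exact hKfrob r hr)
  have hfrob : TendstoUniformlyOn (fun t r => frob (riccatiIter A Q b γ r t - K r)) 0 atTop
      (Set.Ioi 0) := by
    refine Metric.tendstoUniformlyOn_iff.2 fun ε hε => ?_
    obtain ⟨T, hT⟩ := hconv ε hε
    filter_upwards [eventually_ge_atTop T] with t ht r hr
    simpa [abs_of_nonneg (frob_nonneg _)] using hT t ht r hr
  refine ⟨normV_quadratic_lt_top hKfrob hcost, (tendsto_add_atTop_iff_nat 1).1
    (tendsto_distV_quadratic (fun t x r hr => bellmanT_iterate_succ_zero_apply hmom hmean hQ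
      hγ0.le hr t x) hfrob ?_)⟩
  exact tendstoUniformlyOn_zero_of_abs_succ_le hγ0.le hγ1
    (mul_nonneg hγ0.le (integral_nonneg fun n => by positivity))
    (fun t r hr => (abs_sub _ _).trans (add_le_add
      (abs_noiseCost_le hmom hγ0.le hγ1 (fun t => hC t r hr) t) (hcost r hr)))
    hfrob fun t r _ => abs_noiseCost_succ_sub_le hmom hγ0.le hγ1.ne _ t

/-- If, for every `r > 0`, a symmetric positive semidefinite solution `K(r)` of the discrete
algebraic Riccati equation exists, the Riccati iterates are uniformly bounded in Frobenius norm
and converge to `K(r)` uniformly in `r`, then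
`J*(x,r) = xᵀK(r) x + (γ/(1−γ)) ∫ nᵀK(r) n dμ` belongs to `V` and the Bellman iterates `T^t 0`
converge to `J*` in the metric `ρ`. -/
theorem bellman_iterates_converge_to_optimal_cost
    (d : ℕ) (hd : 1 ≤ d)
    (A Q : Matrix (Fin d) (Fin d) ℝ) (b : Fin d → ℝ) (hQ : Q.PosSemidef)
    (γ : ℝ) (hγ : γ ∈ Set.Ioo (0 : ℝ) 1)
    (μ : Measure (Fin d → ℝ)) [IsProbabilityMeasure μ]
    (hmean : ∀ i, ∫ n, n i ∂μ = 0)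
    (hmom : Integrable (fun n => ∑ i, (n i) ^ 2) μ)
    (K : ℝ → Matrix (Fin d) (Fin d) ℝ)
    (hK : ∀ r > (0 : ℝ), (K r).PosSemidef ∧ K r = riccatiStep A Q b γ r (K r))
    (hbdd : ∃ C : ℝ, ∀ t : ℕ, ∀ r > (0 : ℝ), frob (riccatiIter A Q b γ r t) ≤ C)
    (hconv : ∀ ε > (0 : ℝ), ∃ T : ℕ, ∀ t ≥ T, ∀ r > (0 : ℝ),
      frob (riccatiIter A Q b γ r t - K r) < ε) :
    normV (fun x r => x ⬝ᵥ (K r).mulVec x +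
        γ / (1 - γ) * ∫ n, n ⬝ᵥ (K r).mulVec n ∂μ) < ⊤ ∧
    Tendsto (fun t => distV ((bellmanT A Q b γ μ)^[t] (fun _ _ => 0))
        (fun x r => x ⬝ᵥ (K r).mulVec x + γ / (1 - γ) * ∫ n, n ⬝ᵥ (K r).mulVec n ∂μ))
      atTop (nhds 0) :=
  bellman_iterates_converge_to_optimal_cost_general d A Q b hQ γ hγ μ hmean hmom K hbdd hconv

end
end

section
/- For each λ > 0 let K_λ be a symmetric positive semidefinite solution of the discrete algebraic Riccati equation with penalty λ and set f(λ) := x₀ᵀK_λ x₀ + (γ/(1−γ)) ∫ nᵀK_λ n dμ(n). Assume γ^T E[x_TᵀK_λ x_T] → 0 as T → ∞ for every λ > 0, and that the volatility V := Σ_{t=0}^∞ γ^t E[u_t²] and the efficiency E := −Σ_{t=0}^∞ γ^t E[x_tᵀQ x_t] are both finite. Then for every λ > 0, E ≤ λ V − f(λ); equivalently E ≤ −sup_{λ>0}( f(λ) − λ V ). In other words, the (volatility, efficiency) pair of every admissible adapted control lies below the Pareto boundary of the capacity region: no policy can simultaneously achieve low volatility and high efficiency (a "no free lunch" theorem). 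-/
/-!
A positive semidefinite solution `K` of the Riccati equation with penalty `λ` is a Bellman
sub-solution of the Lagrangian-relaxed problem: completing the square in the control gives
`xᵀKx ≤ xᵀQx + λu² + γ (Ax + bu)ᵀK(Ax + bu)` for all `x` and `u`. Along the controlled process
the noise `n_t` is centred and independent of `F_t`, so the cross terms vanish and
`E[x_{t+1}ᵀK x_{t+1}] = E[(Ax_t + bu_t)ᵀK(Ax_t + bu_t)] + ∫ nᵀKn dμ`. Discounting and
telescoping, the transversality condition lets the horizon go to infinity and gives
`f(λ) ≤ λV - E`.
-/

open MeasureTheory Matrix Filter ProbabilityTheory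

noncomputable section

/-- The value `f(λ) = x₀ᵀK_λ x₀ + (γ/(1−γ)) ∫ nᵀK_λ n dμ` of the Lagrangian-relaxed problem. -/
def dualVal {d : ℕ} (γ : ℝ) (μ : Measure (Fin d → ℝ)) (x₀ : Fin d → ℝ)
    (K : Matrix (Fin d) (Fin d) ℝ) : ℝ :=
  x₀ ⬝ᵥ K.mulVec x₀ + γ / (1 - γ) * ∫ n, n ⬝ᵥ K.mulVec n ∂μ


section

variable {n : Type*} [Fintype n]

lemma Matrix.IsSymm.dotProduct_mulVec_comm_s13 {R : Type*} [CommSemiring R] {K : Matrix n n R}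
    (hK : K.IsSymm) (v w : n → R) : v ⬝ᵥ K *ᵥ w = w ⬝ᵥ K *ᵥ v := by
  rw [dotProduct_mulVec, dotProduct_comm, ← vecMul_transpose, hK.eq]

def Matrix.toContinuousBilin [DecidableEq n] (M : Matrix n n ℝ) :
    (n → ℝ) →L[ℝ] (n → ℝ) →L[ℝ] ℝ :=
  (toLinearMap₂' ℝ M).toContinuousBilinearMap

@[simp]
lemma Matrix.toContinuousBilin_apply [DecidableEq n] (M : Matrix n n ℝ) (v w : n → ℝ) :
    M.toContinuousBilin v w = v ⬝ᵥ M *ᵥ w :=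
  toLinearMap₂'_apply' M v w

end

section Riccati

variable {d : ℕ}

lemma riccatiStep_dotProduct_mulVec (A Q : Matrix (Fin d) (Fin d) ℝ) (b : Fin d → ℝ) (γ r : ℝ)
    {K : Matrix (Fin d) (Fin d) ℝ} (hK : K.IsSymm) (v : Fin d → ℝ) :
    v ⬝ᵥ riccatiStep A Q b γ r K *ᵥ v = v ⬝ᵥ Q *ᵥ v + γ * (A *ᵥ v ⬝ᵥ K *ᵥ (A *ᵥ v))
      - γ ^ 2 / (γ * (b ⬝ᵥ K *ᵥ b) + r) * (b ⬝ᵥ K *ᵥ (A *ᵥ v)) ^ 2 := by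
  have hbb : vecMulVec b b *ᵥ (K *ᵥ (A *ᵥ v)) = (b ⬝ᵥ K *ᵥ (A *ᵥ v)) • b := by
    rw [vecMulVec_mulVec, op_smul_eq_smul]
  simp only [riccatiStep, add_mulVec, ← mulVec_mulVec, dotProduct_add]
  rw [dotProduct_mulVec v Aᵀ, vecMul_transpose]
  simp only [sub_mulVec, smul_mulVec, ← mulVec_mulVec, hbb, mulVec_smul, dotProduct_sub,
    dotProduct_smul, smul_eq_mul, hK.dotProduct_mulVec_comm_s13 (A *ᵥ v) b]
  ring

lemma dotProduct_mulVec_le_of_riccati {A Q K : Matrix (Fin d) (Fin d) ℝ} {b : Fin d → ℝ}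
    {γ r : ℝ} (hγ : 0 ≤ γ) (hr : 0 < r) (hK : K.PosSemidef) (hfix : K = riccatiStep A Q b γ r K)
    (v : Fin d → ℝ) (c : ℝ) :
    v ⬝ᵥ K *ᵥ v ≤ v ⬝ᵥ Q *ᵥ v + r * c ^ 2 + γ * ((A *ᵥ v + c • b) ⬝ᵥ K *ᵥ (A *ᵥ v + c • b)) := by
  have hsymm : K.IsSymm := isHermitian_iff_isSymm.1 hK.isHermitian
  have hs : 0 < γ * (b ⬝ᵥ K *ᵥ b) + r := by
    have := hK.dotProduct_mulVec_nonneg b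
    simp only [star_trivial] at this
    positivity
  set s := γ * (b ⬝ᵥ K *ᵥ b) + r
  set p := b ⬝ᵥ K *ᵥ (A *ᵥ v)
  have hexpand : (A *ᵥ v + c • b) ⬝ᵥ K *ᵥ (A *ᵥ v + c • b)
      = A *ᵥ v ⬝ᵥ K *ᵥ (A *ᵥ v) + 2 * c * p + c ^ 2 * (b ⬝ᵥ K *ᵥ b) := by
    simp only [mulVec_add, mulVec_smul, dotProduct_add, add_dotProduct, dotProduct_smul,
      smul_dotProduct, smul_eq_mul, hsymm.dotProduct_mulVec_comm_s13 (A *ᵥ v) b]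
    ring
  have hsq : r * c ^ 2 + 2 * γ * c * p + γ * c ^ 2 * (b ⬝ᵥ K *ᵥ b) + γ ^ 2 / s * p ^ 2
      = (s * c + γ * p) ^ 2 / s := by
    field_simp
    ring
  have : 0 ≤ (s * c + γ * p) ^ 2 / s := by positivity
  conv_lhs => rw [hfix, riccatiStep_dotProduct_mulVec A Q b γ r hsymm]
  rw [hexpand]
  nlinarith

end Riccati

section Moments

variable {Ω : Type*} [MeasurableSpace Ω] {P : Measure Ω} {n : Type*} [Fintype n]

lemma memLp_two_of_integrable_sum_sq {X : Ω → n → ℝ} (hX : AEStronglyMeasurable X P)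
    (h : Integrable (fun ω => ∑ i, X ω i ^ 2) P) : MemLp X 2 P := by
  refine memLp_pi_iff.2 fun i => ?_
  have hXi : AEStronglyMeasurable (fun ω => X ω i) P :=
    (continuous_apply i).comp_aestronglyMeasurable hX
  refine (memLp_two_iff_integrable_sq hXi).2 (h.mono' (hXi.pow 2) (ae_of_all _ fun ω => ?_))
  rw [Real.norm_of_nonneg (sq_nonneg _)]
  exact Finset.single_le_sum (f := fun j => X ω j ^ 2) (fun j _ => sq_nonneg _)
    (Finset.mem_univ i)

lemma integral_eq_zero_of_map_eq {N : Ω → n → ℝ} (hNm : Measurable N) (hN : Integrable N P)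
    {μ : Measure (n → ℝ)} (hlaw : P.map N = μ) (hmean : ∀ i, ∫ v, v i ∂μ = 0) :
    ∫ ω, N ω ∂P = 0 := funext fun i => by
  rw [eval_integral (integrable_pi_iff.1 hN), Pi.zero_apply, ← hmean i, ← hlaw,
    integral_map hNm.aemeasurable (measurable_pi_apply i).aestronglyMeasurable]

lemma ProbabilityTheory.Indep.indepFun_of_measurable {β β' : Type*} [MeasurableSpace β]
    [MeasurableSpace β'] {N : Ω → β} {G : MeasurableSpace Ω}
    (hind : Indep (MeasurableSpace.comap N inferInstance) G P) {Y : Ω → β'}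
    (hY : Measurable[G] Y) : IndepFun Y N P :=
  (IndepFun_iff_Indep _ _ _).2 (indep_of_indep_of_le_left hind.symm hY.comap_le)

variable [DecidableEq n]

lemma integrable_dotProduct_mulVec {X Y : Ω → n → ℝ} (hX : MemLp X 2 P) (hY : MemLp Y 2 P)
    (M : Matrix n n ℝ) : Integrable (fun ω => X ω ⬝ᵥ M *ᵥ Y ω) P := by
  simpa using memLp_one_iff_integrable.1 (M.toContinuousBilin.memLp_of_bilin 1 hX hY)

lemma ProbabilityTheory.IndepFun.integral_dotProduct_mulVec {X Y : Ω → n → ℝ}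
    (hXY : IndepFun X Y P) (hX : Integrable X P) (hY : Integrable Y P) (M : Matrix n n ℝ) :
    ∫ ω, X ω ⬝ᵥ M *ᵥ Y ω ∂P = (∫ ω, X ω ∂P) ⬝ᵥ M *ᵥ ∫ ω, Y ω ∂P := by
  simpa using hXY.integral_bilin hX hY M.toContinuousBilin

lemma ProbabilityTheory.IndepFun.integral_add_dotProduct_mulVec_add [IsFiniteMeasure P]
    {X N : Ω → n → ℝ} (hXN : IndepFun X N P) (hX : MemLp X 2 P) (hN : MemLp N 2 P)
    (hN0 : ∫ ω, N ω ∂P = 0) (M : Matrix n n ℝ) :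
    ∫ ω, (X ω + N ω) ⬝ᵥ M *ᵥ (X ω + N ω) ∂P
      = ∫ ω, X ω ⬝ᵥ M *ᵥ X ω ∂P + ∫ ω, N ω ⬝ᵥ M *ᵥ N ω ∂P := by
  have hXN0 : ∫ ω, X ω ⬝ᵥ M *ᵥ N ω ∂P = 0 := by
    rw [hXN.integral_dotProduct_mulVec (hX.integrable one_le_two) (hN.integrable one_le_two), hN0,
      mulVec_zero, dotProduct_zero]
  have hNX0 : ∫ ω, N ω ⬝ᵥ M *ᵥ X ω ∂P = 0 := by
    rw [hXN.symm.integral_dotProduct_mulVec (hN.integrable one_le_two)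
      (hX.integrable one_le_two), hN0, zero_dotProduct]
  have := integrable_dotProduct_mulVec hX hX M
  have := integrable_dotProduct_mulVec hX hN M
  have := integrable_dotProduct_mulVec hN hX M
  have := integrable_dotProduct_mulVec hN hN M
  simp only [mulVec_add, dotProduct_add, add_dotProduct]
  rw [integral_add (by fun_prop) (by fun_prop), integral_add (by fun_prop) (by fun_prop),
    integral_add (by fun_prop) (by fun_prop), hXN0, hNX0]
  ring

end Moments

lemma integral_dotProduct_mulVec_le_of_riccati {Ω : Type*} [MeasurableSpace Ω] {P : Measure Ω}
    [IsFiniteMeasure P] {d : ℕ} {A Q K : Matrix (Fin d) (Fin d) ℝ} {b : Fin d → ℝ} {γ r : ℝ}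
    (hγ : 0 ≤ γ) (hr : 0 < r) (hK : K.PosSemidef) (hfix : K = riccatiStep A Q b γ r K)
    {X N : Ω → Fin d → ℝ} {U : Ω → ℝ} (hX : MemLp X 2 P) (hU : MemLp U 2 P) (hN : MemLp N 2 P)
    (hind : IndepFun (fun ω => A *ᵥ X ω + U ω • b) N P) (hN0 : ∫ ω, N ω ∂P = 0) :
    ∫ ω, X ω ⬝ᵥ K *ᵥ X ω ∂P ≤ ∫ ω, X ω ⬝ᵥ Q *ᵥ X ω ∂P + r * ∫ ω, U ω ^ 2 ∂P
      + γ * (∫ ω, (A *ᵥ X ω + U ω • b + N ω) ⬝ᵥ K *ᵥ (A *ᵥ X ω + U ω • b + N ω) ∂P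
        - ∫ ω, N ω ⬝ᵥ K *ᵥ N ω ∂P) := by
  have hY : MemLp (fun ω => A *ᵥ X ω + U ω • b) 2 P :=
    ((toLin' A).toContinuousLinearMap.comp_memLp' hX).add ((memLp_top_const b).smul hU)
  rw [hind.integral_add_dotProduct_mulVec_add hY hN hN0, add_sub_cancel_right]
  have := integrable_dotProduct_mulVec hX hX Q
  have := integrable_dotProduct_mulVec hY hY K
  have := hU.integrable_sq
  calc ∫ ω, X ω ⬝ᵥ K *ᵥ X ω ∂P
      ≤ ∫ ω, (X ω ⬝ᵥ Q *ᵥ X ω + r * U ω ^ 2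
          + γ * ((A *ᵥ X ω + U ω • b) ⬝ᵥ K *ᵥ (A *ᵥ X ω + U ω • b))) ∂P :=
        integral_mono (integrable_dotProduct_mulVec hX hX K) (by fun_prop)
          fun ω => dotProduct_mulVec_le_of_riccati hγ hr hK hfix (X ω) (U ω)
    _ = _ := by
        rw [integral_add (by fun_prop) (by fun_prop), integral_add (by fun_prop) (by fun_prop),
          integral_const_mul, integral_const_mul]

lemma le_of_le_add_mul_succ {a c : ℕ → ℝ} {γ C : ℝ} (hγ : 0 ≤ γ)
    (hstep : ∀ t, a t ≤ c t + γ * a (t + 1)) (hc : HasSum (fun t => γ ^ t * c t) C)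
    (ha : Tendsto (fun T => γ ^ T * a T) atTop (nhds 0)) : a 0 ≤ C := by
  have htel : ∀ T, a 0 ≤ ∑ t ∈ Finset.range T, γ ^ t * c t + γ ^ T * a T := by
    intro T
    induction T with
    | zero => simp
    | succ T ih =>
      have := mul_le_mul_of_nonneg_left (hstep T) (pow_nonneg hγ T)
      rw [Finset.sum_range_succ, pow_succ]
      linarith
  simpa using ge_of_tendsto' (hc.tendsto_sum_nat.add ha) htel

lemma add_geometric_le_of_le_add_mul_succ {a c : ℕ → ℝ} {γ m C : ℝ} (hγ0 : 0 ≤ γ) (hγ1 : γ < 1)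
    (hstep : ∀ t, a t ≤ c t + γ * (a (t + 1) - m)) (hc : HasSum (fun t => γ ^ t * c t) C)
    (ha : Tendsto (fun T => γ ^ T * a T) atTop (nhds 0)) : a 0 + γ / (1 - γ) * m ≤ C := by
  -- `a t + γ / (1 - γ) * m` satisfies the recursion without the constant term
  have hshift : γ / (1 - γ) * m = γ * m + γ * (γ / (1 - γ) * m) := by
    field_simp [(sub_pos.2 hγ1).ne']
    ring
  refine le_of_le_add_mul_succ (a := fun t => a t + γ / (1 - γ) * m) hγ0
    (fun t => by linarith [hstep t]) hc ?_
  simpa [mul_add] using ha.add ((tendsto_pow_atTop_nhds_zero_of_lt_one hγ0 hγ1).mul_const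
    (γ / (1 - γ) * m))

lemma measurable_of_linear_recursion {Ω : Type*} {d : ℕ} {F : ℕ → MeasurableSpace Ω}
    (hF : Monotone F) {A : Matrix (Fin d) (Fin d) ℝ} {b x₀ : Fin d → ℝ} {u : ℕ → Ω → ℝ}
    {N x : ℕ → Ω → Fin d → ℝ}
    (hu : ∀ t, Measurable[F t] (u t)) (hN : ∀ t, Measurable[F (t + 1)] (N t))
    (hx0 : x 0 = fun _ => x₀) (hxrec : ∀ t ω, x (t + 1) ω = A *ᵥ x t ω + u t ω • b + N t ω)
    (t : ℕ) : Measurable[F t] (x t) := by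
  induction t with
  | zero => rw [hx0]; exact measurable_const
  | succ t ih =>
    have hx := ih.mono (hF t.le_succ) le_rfl
    have hu := (hu t).mono (hF t.le_succ) le_rfl
    rw [funext (hxrec t)]
    fun_prop

theorem no_free_lunch_general
    (d : ℕ)
    (A Q : Matrix (Fin d) (Fin d) ℝ) (b : Fin d → ℝ)
    (γ : ℝ) (hγ : γ ∈ Set.Ioo (0 : ℝ) 1)
    (μ : Measure (Fin d → ℝ))
    (hmean : ∀ i, ∫ n, n i ∂μ = 0)
    (hmom : Integrable (fun n => ∑ i, (n i) ^ 2) μ)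
    (K : ℝ → Matrix (Fin d) (Fin d) ℝ)
    (hK : ∀ lam > (0 : ℝ), (K lam).PosSemidef ∧ K lam = riccatiStep A Q b γ lam (K lam))
    (Ω : Type) [mΩ : MeasurableSpace Ω] (P : Measure Ω) [IsProbabilityMeasure P]
    (F : ℕ → MeasurableSpace Ω) (hFmono : Monotone F) (hFle : ∀ t, F t ≤ mΩ)
    (noise : ℕ → Ω → (Fin d → ℝ))
    (hnmeas : ∀ t, Measurable (noise t))
    (hlaw : ∀ t, Measure.map (noise t) P = μ)
    (hnindep : ∀ t, Indep (MeasurableSpace.comap (noise t) inferInstance) (F t) P)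
    (hnadapted : ∀ t, Measurable[F (t + 1)] (noise t))
    (x₀ : Fin d → ℝ)
    (u : ℕ → Ω → ℝ)
    (humeas : ∀ t, Measurable[F t] (u t))
    (huint : ∀ t, Integrable (fun ω => (u t ω) ^ 2) P)
    (x : ℕ → Ω → (Fin d → ℝ))
    (hx0 : x 0 = fun _ => x₀)
    (hxrec : ∀ t ω, x (t + 1) ω = A.mulVec (x t ω) + (u t ω) • b + noise t ω)
    (hxint : ∀ t, Integrable (fun ω => ∑ i, (x t ω i) ^ 2) P)
    (htrans : ∀ lam > (0 : ℝ),
      Tendsto (fun T => γ ^ T * ∫ ω, (x T ω) ⬝ᵥ (K lam).mulVec (x T ω) ∂P)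
        atTop (nhds 0))
    (hVsum : Summable fun t => γ ^ t * ∫ ω, (u t ω) ^ 2 ∂P)
    (hEsum : Summable fun t => γ ^ t * ∫ ω, (x t ω) ⬝ᵥ Q.mulVec (x t ω) ∂P) :
    (∀ lam > (0 : ℝ),
      -(∑' t : ℕ, γ ^ t * ∫ ω, (x t ω) ⬝ᵥ Q.mulVec (x t ω) ∂P) ≤
        lam * (∑' t : ℕ, γ ^ t * ∫ ω, (u t ω) ^ 2 ∂P) - dualVal γ μ x₀ (K lam)) ∧
    -(∑' t : ℕ, γ ^ t * ∫ ω, (x t ω) ⬝ᵥ Q.mulVec (x t ω) ∂P) ≤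
      -(⨆ lam : Set.Ioi (0 : ℝ),
        (dualVal γ μ x₀ (K lam.1) -
          lam.1 * ∑' t : ℕ, γ ^ t * ∫ ω, (u t ω) ^ 2 ∂P)) := by
  obtain ⟨hγ0, hγ1⟩ := hγ
  have hxF := measurable_of_linear_recursion hFmono humeas hnadapted hx0 hxrec
  have hx (t : ℕ) : MemLp (x t) 2 P :=
    memLp_two_of_integrable_sum_sq ((hxF t).mono (hFle t) le_rfl).aestronglyMeasurable (hxint t)
  have hu (t : ℕ) : MemLp (u t) 2 P :=
    (memLp_two_iff_integrable_sq ((humeas t).mono (hFle t) le_rfl).aestronglyMeasurable).2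
      (huint t)
  have hid : MemLp id 2 μ := memLp_two_of_integrable_sum_sq aestronglyMeasurable_id hmom
  have hn (t : ℕ) : MemLp (noise t) 2 P :=
    (memLp_map_measure_iff aestronglyMeasurable_id (hnmeas t).aemeasurable).1 (by rwa [hlaw t])
  have hn0 (t : ℕ) : ∫ ω, noise t ω ∂P = 0 :=
    integral_eq_zero_of_map_eq (hnmeas t) ((hn t).integrable one_le_two) (hlaw t) hmean
  have hind (t : ℕ) : IndepFun (fun ω => A *ᵥ x t ω + u t ω • b) (noise t) P := by
    have := hxF t
    have := humeas t
    exact (hnindep t).indepFun_of_measurable (by fun_prop)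
  have hbound : ∀ lam > (0 : ℝ), -(∑' t : ℕ, γ ^ t * ∫ ω, x t ω ⬝ᵥ Q *ᵥ x t ω ∂P) ≤
      lam * (∑' t : ℕ, γ ^ t * ∫ ω, u t ω ^ 2 ∂P) - dualVal γ μ x₀ (K lam) := by
    intro lam hlam
    obtain ⟨hKpsd, hKfix⟩ := hK lam hlam
    have hstep (t : ℕ) := integral_dotProduct_mulVec_le_of_riccati hγ0.le hlam hKpsd hKfix
      (hx t) (hu t) (hn t) (hind t) (hn0 t)
    simp only [← hxrec, ← integral_map (hnmeas _).aemeasurable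
      (by fun_prop : AEStronglyMeasurable (fun n => n ⬝ᵥ K lam *ᵥ n) _), hlaw] at hstep
    have hsum := hEsum.hasSum.add (hVsum.hasSum.mul_left lam)
    simp only [← mul_add, mul_left_comm lam] at hsum
    have := add_geometric_le_of_le_add_mul_succ hγ0.le hγ1 hstep hsum (htrans lam hlam)
    simp only [hx0, integral_const, probReal_univ, one_smul] at this
    rw [dualVal]
    linarith
  exact ⟨hbound, neg_le_neg (ciSup_le fun lam => by linarith [hbound lam.1 lam.2])⟩

/-- "No free lunch" theorem: along any admissible adapted control with finite volatility
`V = Σ_t γ^t E[u_t²]` and finite efficiency `E = −Σ_t γ^t E[x_tᵀQ x_t]`, one has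
`E ≤ λV − f(λ)` for every `λ > 0`; equivalently `E ≤ −sup_{λ>0}(f(λ) − λV)`, i.e. the
(volatility, efficiency) pair of every admissible policy lies below the Pareto boundary of the
capacity region. -/
theorem no_free_lunch
    (d : ℕ) (hd : 1 ≤ d)
    (A Q : Matrix (Fin d) (Fin d) ℝ) (b : Fin d → ℝ) (hQ : Q.PosSemidef)
    (γ : ℝ) (hγ : γ ∈ Set.Ioo (0 : ℝ) 1)
    (μ : Measure (Fin d → ℝ)) [IsProbabilityMeasure μ]
    (hmean : ∀ i, ∫ n, n i ∂μ = 0)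
    (hmom : Integrable (fun n => ∑ i, (n i) ^ 2) μ)
    (K : ℝ → Matrix (Fin d) (Fin d) ℝ)
    (hK : ∀ lam > (0 : ℝ), (K lam).PosSemidef ∧ K lam = riccatiStep A Q b γ lam (K lam))
    (Ω : Type) [mΩ : MeasurableSpace Ω] (P : Measure Ω) [IsProbabilityMeasure P]
    (F : ℕ → MeasurableSpace Ω) (hFmono : Monotone F) (hFle : ∀ t, F t ≤ mΩ)
    (noise : ℕ → Ω → (Fin d → ℝ))
    (hnmeas : ∀ t, Measurable (noise t))
    (hlaw : ∀ t, Measure.map (noise t) P = μ)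
    (hnindep : ∀ t, Indep (MeasurableSpace.comap (noise t) inferInstance) (F t) P)
    (hnadapted : ∀ t, Measurable[F (t + 1)] (noise t))
    (x₀ : Fin d → ℝ)
    (u : ℕ → Ω → ℝ)
    (humeas : ∀ t, Measurable[F t] (u t))
    (huint : ∀ t, Integrable (fun ω => (u t ω) ^ 2) P)
    (x : ℕ → Ω → (Fin d → ℝ))
    (hx0 : x 0 = fun _ => x₀)
    (hxrec : ∀ t ω, x (t + 1) ω = A.mulVec (x t ω) + (u t ω) • b + noise t ω)
    (hxint : ∀ t, Integrable (fun ω => ∑ i, (x t ω i) ^ 2) P)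
    (htrans : ∀ lam > (0 : ℝ),
      Tendsto (fun T => γ ^ T * ∫ ω, (x T ω) ⬝ᵥ (K lam).mulVec (x T ω) ∂P)
        atTop (nhds 0))
    (hVsum : Summable fun t => γ ^ t * ∫ ω, (u t ω) ^ 2 ∂P)
    (hEsum : Summable fun t => γ ^ t * ∫ ω, (x t ω) ⬝ᵥ Q.mulVec (x t ω) ∂P) :
    (∀ lam > (0 : ℝ),
      -(∑' t : ℕ, γ ^ t * ∫ ω, (x t ω) ⬝ᵥ Q.mulVec (x t ω) ∂P) ≤
        lam * (∑' t : ℕ, γ ^ t * ∫ ω, (u t ω) ^ 2 ∂P) - dualVal γ μ x₀ (K lam)) ∧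
    -(∑' t : ℕ, γ ^ t * ∫ ω, (x t ω) ⬝ᵥ Q.mulVec (x t ω) ∂P) ≤
      -(⨆ lam : Set.Ioi (0 : ℝ),
        (dualVal γ μ x₀ (K lam.1) -
          lam.1 * ∑' t : ℕ, γ ^ t * ∫ ω, (u t ω) ^ 2 ∂P)) :=
  no_free_lunch_general d A Q b γ hγ μ hmean hmom K hK Ω (mΩ := mΩ) P F hFmono hFle noise hnmeas
    hlaw hnindep hnadapted x₀ u humeas huint x hx0 hxrec hxint htrans hVsum hEsum

end
end
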